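/- Let M be an n×n matrix with integer entries and determinant 1 or −1 which is hyperbolic, i.e. no root in ℂ of its characteristic polynomial has absolute value 1. If α, β and αβ are all complex eigenvalues of M and D(α) ≤ D(β), then gcd(D(β), D(αβ)) ≠ 1. -/

import Mathlib

/-!
Write `γ = αβ`, `m = D(β)`, `k = D(γ)` and suppose `gcd(m, k) = 1`. Then `[ℚ(γ, β) : ℚ]` is
divisible by both `m` and `k`, so `β` still has degree `m` over `F = ℚ(γ)` and its minimal
polynomial `q` there is the rational one. Since `β = γ α⁻¹`, `β` is a root of the polynomial
`X^a p(γ / X)` over `F`, where `p` is the minimal polynomial of `α` and `a = D(α) ≤ m`; hence this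
polynomial is `p(0) q`, and comparing constant terms gives `γ^a = p(0) q(0)`. Because `det M = ±1`,
every eigenvalue is a unit, so `p(0), q(0) = ±1` and `|γ| = 1`, contradicting hyperbolicity.
-/

open Polynomial

theorem Matrix.isUnit_charpoly_coeff_zero {R n : Type*} [CommRing R] [Fintype n] [DecidableEq n]
    {M : Matrix n n R} (h : IsUnit M.det) : IsUnit (M.charpoly.coeff 0) := by
  rw [M.det_eq_sign_charpoly_coeff] at h
  exact isUnit_of_mul_isUnit_right h

theorem minpoly_rat_coeff_zero_sq_eq_one {L : Type*} [Field L] [CharZero L] {f : ℤ[X]}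
    (hf : f.Monic) (hf0 : IsUnit (f.coeff 0)) {x : L} (hx : aeval x f = 0) :
    (minpoly ℚ x).coeff 0 ^ 2 = 1 := by
  have hint : IsIntegral ℤ x := ⟨f, hf, hx⟩
  have hunit : IsUnit ((minpoly ℤ x).coeff 0) :=
    isUnit_of_dvd_unit (map_dvd constantCoeff (minpoly.isIntegrallyClosed_dvd hint hx)) hf0
  rw [minpoly.isIntegrallyClosed_eq_field_fractions' ℚ hint, coeff_map, ← map_pow,
    Int.isUnit_sq hunit, map_one]

open IntermediateField Module in
theorem minpoly_adjoin_eq_map_of_coprime {K L : Type*} [Field K] [Field L] [Algebra K L]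
    {x y : L} (hx : IsIntegral K x) (hy : IsIntegral K y)
    (h : (minpoly K x).natDegree.Coprime (minpoly K y).natDegree) :
    minpoly K⟮y⟯ x = (minpoly K x).map (algebraMap K K⟮y⟯) := by
  have hxy : IsIntegral K⟮y⟯ x := hx.tower_top
  set E := K⟮y⟯⟮x⟯
  have : FiniteDimensional K K⟮y⟯ := adjoin.finiteDimensional hy
  have : FiniteDimensional K⟮y⟯ E := adjoin.finiteDimensional hxy
  have : FiniteDimensional K E := .trans K K⟮y⟯ E
  have : IsScalarTower K E L := .of_algebraMap_eq fun _ ↦ rfl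
  have hdvd_finrank : (minpoly K x).natDegree ∣ finrank K E := by
    rw [← AdjoinSimple.algebraMap_gen K⟮y⟯ x, minpoly.algebraMap_eq (algebraMap E L).injective]
    exact minpoly.degree_dvd (IsIntegral.of_finite K _)
  have hdvd_deg : (minpoly K x).natDegree ∣ (minpoly K⟮y⟯ x).natDegree := by
    have : Module.Free K⟮y⟯ E := .of_divisionRing _ _
    rw [← finrank_mul_finrank K K⟮y⟯ E, adjoin.finrank hy, adjoin.finrank hxy] at hdvd_finrank
    exact h.dvd_of_dvd_mul_left hdvd_finrank
  refine (eq_of_monic_of_dvd_of_natDegree_le (minpoly.monic hxy) ((minpoly.monic hx).map _)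
    (minpoly.dvd_map_of_isScalarTower K K⟮y⟯ x) ?_).symm
  rw [natDegree_map]
  exact Nat.le_of_dvd (minpoly.natDegree_pos hxy) hdvd_deg

theorem pow_natDegree_eq_coeff_zero_mul_coeff_zero_minpoly {F L : Type*} [Field F] [Field L]
    [Algebra F L] {p : F[X]} (hp : p.Monic) (hp0 : p.coeff 0 ≠ 0) {α β : L} {g : F}
    (hα : aeval α p = 0) (hαβ : α * β = algebraMap F L g)
    (hdeg : p.natDegree ≤ (minpoly F β).natDegree) :
    g ^ p.natDegree = p.coeff 0 * (minpoly F β).coeff 0 := by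
  have hα0 : α ≠ 0 := by
    rintro rfl
    rw [← coeff_zero_eq_aeval_zero', map_eq_zero_iff _ (algebraMap F L).injective] at hα
    exact hp0 hα
  have : Invertible α := invertibleOfNonzero hα0
  -- `r = X^a p(g / X)`, which vanishes at `g α⁻¹ = β`
  set r := p.reverse.scaleRoots g
  have hrev : p.reverse.natDegree = p.natDegree := by
    rw [reverse_natDegree, natTrailingDegree_eq_zero.mpr (.inr hp0), Nat.sub_zero]
  have hr : aeval β r = 0 := by
    have h := scaleRoots_aeval_eq_zero (r := g) ((eval₂_reverse_eq_zero_iff _ α p).mpr hα)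
    rwa [invOf_eq_inv, ← hαβ, mul_comm α, mul_inv_cancel_right₀ hα0] at h
  have hr_lead : r.leadingCoeff = p.coeff 0 := by
    rw [leadingCoeff_scaleRoots, reverse_leadingCoeff, trailingCoeff_eq_coeff_zero hp0]
  have hr0 : r ≠ 0 := leadingCoeff_ne_zero.mp (hr_lead ▸ hp0)
  have hβ : IsIntegral F β := IsAlgebraic.isIntegral ⟨r, hr0, hr⟩
  have hr_eq : r = C (p.coeff 0) * minpoly F β := by
    rw [← hr_lead]
    refine eq_leadingCoeff_mul_of_monic_of_dvd_of_natDegree_le (minpoly.monic hβ)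
      (minpoly.dvd F β hr) ?_
    rwa [natDegree_scaleRoots, hrev]
  simpa [r, coeff_scaleRoots, hrev, hp.leadingCoeff] using congrArg (coeff · 0) hr_eq

open IntermediateField in
/-- Let `M` be an `n × n` integer matrix with determinant `±1` which is hyperbolic (no
complex root of its characteristic polynomial has absolute value `1`). If `α`, `β` and
`α * β` are all complex eigenvalues of `M` and `D(α) ≤ D(β)`, then
`gcd (D(β), D(αβ)) ≠ 1`, where `D(λ)` is the degree of the minimal polynomial of `λ`
over `ℚ`. -/
theorem gcd_of_degrees_ne_one (n : ℕ) (M : Matrix (Fin n) (Fin n) ℤ)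
    (hdet : M.det = 1 ∨ M.det = -1)
    (hhyp : ∀ z : ℂ, (aeval z) M.charpoly = 0 → ‖z‖ ≠ 1)
    (α β : ℂ) (hα : (aeval α) M.charpoly = 0) (hβ : (aeval β) M.charpoly = 0)
    (hαβ : (aeval (α * β)) M.charpoly = 0)
    (hle : (minpoly ℚ α).natDegree ≤ (minpoly ℚ β).natDegree) :
    Nat.gcd (minpoly ℚ β).natDegree (minpoly ℚ (α * β)).natDegree ≠ 1 := by
  intro hcop
  have hint (z : ℂ) (hz : aeval z M.charpoly = 0) : IsIntegral ℚ z :=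
    (show IsIntegral ℤ z from ⟨M.charpoly, M.charpoly_monic, hz⟩).tower_top
  have hsq (z : ℂ) (hz : aeval z M.charpoly = 0) : (minpoly ℚ z).coeff 0 ^ 2 = 1 :=
    minpoly_rat_coeff_zero_sq_eq_one M.charpoly_monic
      (Matrix.isUnit_charpoly_coeff_zero (Int.isUnit_iff.mpr hdet)) hz
  set F := ℚ⟮α * β⟯
  have hβF : minpoly F β = (minpoly ℚ β).map (algebraMap ℚ F) :=
    minpoly_adjoin_eq_map_of_coprime (hint β hβ) (hint _ hαβ) hcop
  set p := (minpoly ℚ α).map (algebraMap ℚ F)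
  have hp0 : p.coeff 0 ^ 2 = 1 := by rw [coeff_map, ← map_pow, hsq α hα, map_one]
  have hp0_ne : p.coeff 0 ≠ 0 := fun h ↦ by simp [h] at hp0
  have hconst := pow_natDegree_eq_coeff_zero_mul_coeff_zero_minpoly
    ((minpoly.monic (hint α hα)).map _) hp0_ne
    (by rw [aeval_map_algebraMap, minpoly.aeval]) (AdjoinSimple.algebraMap_gen ℚ (α * β)).symm
    (by rwa [hβF, natDegree_map, natDegree_map])
  have hγ : (α * β) ^ (p.natDegree * 2) = 1 := by
    rw [← AdjoinSimple.algebraMap_gen ℚ (α * β), ← map_pow, pow_mul, hconst, mul_pow, hp0, hβF,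
      coeff_map, ← map_pow, hsq β hβ, map_one, one_mul, map_one]
  have hp_pos : 0 < p.natDegree := by
    rw [natDegree_map]; exact minpoly.natDegree_pos (hint α hα)
  exact hhyp _ hαβ (Complex.norm_eq_one_of_pow_eq_one hγ (by positivity))
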